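/- arXiv:1902.07286 — 11 statements merged into one kernel-verified Lean document; each statement's English description precedes it below -/
import Mathlib

section
/- Suppose the map x ↦ ∇f_x(x) is continuous on X. If x* ∈ X solves VI(X,F), then the gap function ρ tends to 0 at x*: for every sequence (or net) of points x ∈ X with x → x*, ρ(x) → 0. -/
/-!
Convexity of `f_x` gives `f_x(x) - f_x(x') ≤ ⟪F x, x - x'⟫` for every `x' ∈ X`. Splitting
`F x = F x* + (F x - F x*)` and using `⟪F x*, x' - x*⟫ ≥ 0` bounds the right-hand side by
`⟪F x*, x - x*⟫ + ‖F x - F x*‖ · D_X`, uniformly in `x'`. This bound is continuous in `x` and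
vanishes at `x*`, so `0 ≤ ρ(x)` squeezes `ρ` to `0`.
-/

open scoped RealInnerProductSpace

open AffineMap Set Filter Topology

theorem ConvexOn.le_of_hasFDerivAt {E : Type*} [NormedAddCommGroup E] [NormedSpace ℝ E]
    {s : Set E} {g : E → ℝ} {g' : E →L[ℝ] ℝ} {x y : E} (hg : ConvexOn ℝ s g)
    (hx : x ∈ s) (hy : y ∈ s) (hg' : HasFDerivAt g g' x) :
    g x + g' (y - x) ≤ g y := by
  have hseg : ConvexOn ℝ (Icc 0 1) (g ∘ (lineMap x y : ℝ →ᵃ[ℝ] E)) :=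
    (hg.comp_affineMap (lineMap x y)).subset (fun t ht => hg.1.lineMap_mem hx hy ht)
      (convex_Icc 0 1)
  have hderiv : HasDerivAt (g ∘ (lineMap x y : ℝ →ᵃ[ℝ] E)) (g' (y - x)) 0 := by
    rw [← lineMap_apply_zero x y (k := ℝ)] at hg'
    exact hg'.comp_hasDerivAt 0 hasDerivAt_lineMap
  have hslope := hseg.le_slope_of_hasDerivAt (left_mem_Icc.2 zero_le_one)
    (right_mem_Icc.2 zero_le_one) one_pos hderiv
  simp only [slope_def_field, Function.comp_apply, lineMap_apply_zero, lineMap_apply_one,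
    sub_zero, div_one] at hslope
  linarith

theorem ConvexOn.le_of_hasGradientAt {E : Type*} [NormedAddCommGroup E]
    [InnerProductSpace ℝ E] [CompleteSpace E] {s : Set E} {g : E → ℝ} {G x y : E}
    (hg : ConvexOn ℝ s g) (hx : x ∈ s) (hy : y ∈ s) (hG : HasGradientAt g G x) :
    g x + ⟪G, y - x⟫ ≤ g y :=
  hg.le_of_hasFDerivAt hx hy hG.hasFDerivAt

theorem ConvexOn.sub_csInf_image_le_of_hasGradientAt {E : Type*} [NormedAddCommGroup E]
    [InnerProductSpace ℝ E] [CompleteSpace E] {s : Set E} {g : E → ℝ} {G x : E} {B : ℝ}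
    (hg : ConvexOn ℝ s g) (hx : x ∈ s) (hG : HasGradientAt g G x)
    (hB : ∀ y ∈ s, ⟪G, x - y⟫ ≤ B) :
    g x - sInf (g '' s) ≤ B := by
  have hlow : g x - B ≤ sInf (g '' s) := by
    refine le_csInf ⟨g x, x, hx, rfl⟩ ?_
    rintro _ ⟨y, hy, rfl⟩
    have hgrad := hg.le_of_hasGradientAt hx hy hG
    rw [← neg_sub x y, inner_neg_right] at hgrad
    linarith [hB y hy]
  linarith

theorem real_inner_sub_le_of_inner_nonneg {E : Type*} [NormedAddCommGroup E]
    [InnerProductSpace ℝ E] (a b x y z : E) (h : 0 ≤ ⟪b, z - y⟫) :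
    ⟪a, x - z⟫ ≤ ⟪b, x - y⟫ + ‖a - b‖ * ‖x - z‖ := by
  have hsplit : ⟪a, x - z⟫ = ⟪b, x - y⟫ - ⟪b, z - y⟫ + ⟪a - b, x - z⟫ := by
    rw [inner_sub_left, ← inner_sub_right, sub_sub_sub_cancel_right]
    ring
  linarith [real_inner_le_norm (a - b) (x - z)]

theorem stmt_1_general
    {E : Type*} [NormedAddCommGroup E] [InnerProductSpace ℝ E] [FiniteDimensional ℝ E]
    (X : Set E) (hXcp : IsCompact X)
    (f : E → E → ℝ) (Df : E → E → E)
    (hconv : ∀ x ∈ X, ConvexOn ℝ X (f x))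
    (hgrad : ∀ x ∈ X, ∀ y ∈ X, HasGradientAt (f x) (Df x y) y)
    (hcont : ContinuousOn (fun x => Df x x) X)
    (xs : E) (hxs : xs ∈ X)
    (hVI : ∀ x ∈ X, 0 ≤ ⟪Df xs xs, x - xs⟫) :
    Filter.Tendsto (fun x => f x x - sInf (f x '' X)) (nhdsWithin xs X) (nhds 0) := by
  set bound : E → ℝ := fun x => ⟪Df xs xs, x - xs⟫ + ‖Df x x - Df xs xs‖ * Metric.diam X
  have hbound : Tendsto bound (𝓝[X] xs) (𝓝 0) := by
    have hcw : ContinuousWithinAt bound X xs :=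
      ((continuous_const.inner (continuous_id.sub continuous_const)).continuousWithinAt).add
        (((hcont xs hxs).sub continuousWithinAt_const).norm.mul continuousWithinAt_const)
    simpa [bound] using hcw.tendsto
  refine tendsto_of_tendsto_of_tendsto_of_le_of_le' tendsto_const_nhds hbound ?_ ?_
  all_goals filter_upwards [self_mem_nhdsWithin] with x hx
  · have hbdd : BddBelow (f x '' X) := hXcp.bddBelow_image fun y hy =>
      (hgrad x hx y hy).hasFDerivAt.continuousAt.continuousWithinAt
    linarith [csInf_le hbdd ⟨x, hx, rfl⟩]
  · refine (hconv x hx).sub_csInf_image_le_of_hasGradientAt hx (hgrad x hx x hx) fun y hy => ?_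
    calc ⟪Df x x, x - y⟫ ≤ ⟪Df xs xs, x - xs⟫ + ‖Df x x - Df xs xs‖ * ‖x - y‖ :=
          real_inner_sub_le_of_inner_nonneg _ _ _ _ _ (hVI y hy)
      _ ≤ ⟪Df xs xs, x - xs⟫ + ‖Df x x - Df xs xs‖ * Metric.diam X := by
          gcongr
          rw [← dist_eq_norm]
          exact Metric.dist_le_diam_of_mem hXcp.isBounded hx hy

/-- If `x ↦ ∇f_x(x)` is continuous on `X` and `x*` solves VI(X,F),
then the gap function `ρ(x) = f_x(x) - min_{x'∈X} f_x(x')` tends to `0` as `x → x*`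
within `X`. -/
theorem stmt_1
    {E : Type*} [NormedAddCommGroup E] [InnerProductSpace ℝ E] [FiniteDimensional ℝ E]
    (X : Set E) (hXne : X.Nonempty) (hXcp : IsCompact X) (hXcv : Convex ℝ X)
    (f : E → E → ℝ) (Df : E → E → E)
    (hconv : ∀ x ∈ X, ConvexOn ℝ X (f x))
    (hgrad : ∀ x ∈ X, ∀ y ∈ X, HasGradientAt (f x) (Df x y) y)
    (hcont : ContinuousOn (fun x => Df x x) X)
    (xs : E) (hxs : xs ∈ X)
    (hVI : ∀ x ∈ X, 0 ≤ ⟪Df xs xs, x - xs⟫) :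
    Filter.Tendsto (fun x => f x x - sInf (f x '' X)) (nhdsWithin xs X) (nhds 0) :=
  stmt_1_general X hXcp f Df hconv hgrad hcont xs hxs hVI
end

section
/- If f is (α,β)-regular, then the map F(x) = ∇f_x(x) is (α−β)-strongly monotone on X: ⟨F(x) − F(y), x − y⟩ ≥ (α−β)‖x−y‖² for all x,y ∈ X. -/
open scoped RealInnerProductSpace

/-!
Split `F x - F y = (∇f_x(x) - ∇f_x(y)) + (∇f_x(y) - ∇f_y(y))`. Adding the strong-convexity
inequality of `f_x` at `(x, y)` and at `(y, x)` bounds the first part's pairing with `x - y`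
below by `α‖x - y‖²`; Cauchy–Schwarz and the Lipschitz bound in the query point bound the
second part's pairing below by `-β‖x - y‖²`.
-/

section

variable {E : Type*} [NormedAddCommGroup E] [InnerProductSpace ℝ E]

theorem mul_norm_sub_sq_le_inner_of_strongConvex_ineq {s : Set E} {g : E → ℝ} {Dg : E → E}
    {α : ℝ} (hg : ∀ y ∈ s, ∀ z ∈ s, g z + ⟪Dg z, y - z⟫ + α / 2 * ‖y - z‖ ^ 2 ≤ g y)
    {x y : E} (hx : x ∈ s) (hy : y ∈ s) :
    α * ‖x - y‖ ^ 2 ≤ ⟪Dg x - Dg y, x - y⟫ := by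
  have hxy := hg x hx y hy
  have hyx := hg y hy x hx
  rw [← neg_sub x y, norm_neg, inner_neg_right] at hyx
  rw [inner_sub_left]
  linarith

theorem neg_mul_norm_sq_le_inner_of_norm_le {a v : E} {β : ℝ} (h : ‖a‖ ≤ β * ‖v‖) :
    -(β * ‖v‖ ^ 2) ≤ ⟪a, v⟫ :=
  calc -(β * ‖v‖ ^ 2) = -(β * ‖v‖ * ‖v‖) := by ring
    _ ≤ -(‖a‖ * ‖v‖) := by gcongr
    _ ≤ ⟪a, v⟫ := neg_le_of_abs_le (abs_real_inner_le_norm a v)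

end

theorem stmt_6_general
    {E : Type*} [NormedAddCommGroup E] [InnerProductSpace ℝ E]
    (X : Set E)
    (f : E → E → ℝ) (Df : E → E → E) (α β : ℝ)
    (hsc : ∀ x ∈ X, ∀ y ∈ X, ∀ z ∈ X,
      f x z + ⟪Df x z, y - z⟫ + α / 2 * ‖y - z‖ ^ 2 ≤ f x y)
    (hlip : ∀ x' ∈ X, ∀ x ∈ X, ∀ y ∈ X, ‖Df x x' - Df y x'‖ ≤ β * ‖x - y‖) :
    ∀ x ∈ X, ∀ y ∈ X, (α - β) * ‖x - y‖ ^ 2 ≤ ⟪Df x x - Df y y, x - y⟫ := by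
  intro x hx y hy
  have hconv := mul_norm_sub_sq_le_inner_of_strongConvex_ineq (hsc x hx) hx hy
  have hquery := neg_mul_norm_sq_le_inner_of_norm_le (hlip y hy x hx y hy)
  have hsplit : Df x x - Df y y = (Df x x - Df x y) + (Df x y - Df y y) := by abel
  rw [hsplit, inner_add_left]
  linarith

/-- If `f` is `(α,β)`-regular, then `F(x) = ∇f_x(x)` is
`(α-β)`-strongly monotone on `X`. -/
theorem stmt_6
    {E : Type*} [NormedAddCommGroup E] [InnerProductSpace ℝ E] [FiniteDimensional ℝ E]
    (X : Set E) (hXne : X.Nonempty) (hXcp : IsCompact X) (hXcv : Convex ℝ X)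
    (f : E → E → ℝ) (Df : E → E → E) (α β : ℝ) (hα : 0 ≤ α) (hβ : 0 ≤ β)
    (hsc : ∀ x ∈ X, ∀ y ∈ X, ∀ z ∈ X,
      f x z + ⟪Df x z, y - z⟫ + α / 2 * ‖y - z‖ ^ 2 ≤ f x y)
    (hlip : ∀ x' ∈ X, ∀ x ∈ X, ∀ y ∈ X, ‖Df x x' - Df y x'‖ ≤ β * ‖x - y‖) :
    ∀ x ∈ X, ∀ y ∈ X, (α - β) * ‖x - y‖ ^ 2 ≤ ⟪Df x x - Df y y, x - y⟫ :=
  stmt_6_general X f Df α β hsc hlip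
end

section
/- If f is (α,β)-regular with α > 0, then for every x ∈ X the function f_x has a unique minimizer T(x) over X, and the map T satisfies ‖T(x) − T(y)‖ ≤ (β/α)‖x−y‖ for all x,y ∈ X; in particular T is a (β/α)-contraction when α > β and is nonexpansive when α = β. -/
open scoped RealInnerProductSpace
open Filter
open Filter

lemma aux_exists_min {E : Type*} [NormedAddCommGroup E] [InnerProductSpace ℝ E]
    (X : Set E) (hXne : X.Nonempty) (hXcp : IsCompact X)
    (g : E → ℝ) (Dg : E → E) (α : ℝ)
    (hsc : ∀ y ∈ X, ∀ z ∈ X, g z + ⟪Dg z, y - z⟫ + α / 2 * ‖y - z‖ ^ 2 ≤ g y)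
    (hα : 0 < α) :
    ∃ y ∈ X, ∀ z ∈ X, g y ≤ g z := by
  obtain ⟨z₀, hz₀⟩ := hXne
  -- g is bounded below on X
  obtain ⟨R, hR⟩ := hXcp.isBounded.subset_closedBall z₀
  have hbdd : BddBelow (g '' X) := by
    refine ⟨g z₀ - ‖Dg z₀‖ * R, ?_⟩
    rintro - ⟨z, hz, rfl⟩
    have h1 := hsc z hz z₀ hz₀
    have h2 : |⟪Dg z₀, z - z₀⟫| ≤ ‖Dg z₀‖ * ‖z - z₀‖ := abs_real_inner_le_norm _ _
    have h3 : ‖z - z₀‖ ≤ R := by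
      have := hR hz
      simpa [Metric.mem_closedBall, dist_eq_norm] using this
    have h4 : ‖Dg z₀‖ * ‖z - z₀‖ ≤ ‖Dg z₀‖ * R :=
      mul_le_mul_of_nonneg_left h3 (norm_nonneg _)
    have h0 : 0 ≤ α / 2 * ‖z - z₀‖ ^ 2 := by positivity
    have h5 := neg_abs_le (⟪Dg z₀, z - z₀⟫ : ℝ)
    linarith
  set m := sInf (g '' X) with hm
  have hne' : (g '' X).Nonempty := ⟨g z₀, ⟨z₀, hz₀, rfl⟩⟩
  -- minimizing sequence
  have hseq : ∀ n : ℕ, ∃ z ∈ X, g z < m + 1 / (n + 1) := by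
    intro n
    have hpos : (0:ℝ) < 1 / (n + 1) := by positivity
    obtain ⟨-, ⟨z, hz, rfl⟩, hlt⟩ := exists_lt_of_csInf_lt hne' (by linarith : m < m + 1/(n+1))
    exact ⟨z, hz, hlt⟩
  choose y hyX hyv using hseq
  obtain ⟨a, haX, φ, hφ, hconv⟩ := hXcp.tendsto_subseq hyX
  refine ⟨a, haX, ?_⟩
  have key : g a ≤ m := by
    have hub : ∀ n, g a ≤ m + 1 / (φ n + 1) + ‖Dg a‖ * ‖y (φ n) - a‖ := by
      intro n
      have h1 := hsc (y (φ n)) (hyX (φ n)) a haX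
      have h2 : |⟪Dg a, y (φ n) - a⟫| ≤ ‖Dg a‖ * ‖y (φ n) - a‖ := abs_real_inner_le_norm _ _
      have h3 := hyv (φ n)
      have h0 : 0 ≤ α / 2 * ‖y (φ n) - a‖ ^ 2 := by positivity
      have h5 := neg_abs_le (⟪Dg a, y (φ n) - a⟫ : ℝ)
      linarith
    have hlim : Tendsto (fun n => m + 1 / ((φ n : ℝ) + 1) + ‖Dg a‖ * ‖y (φ n) - a‖)
        atTop (nhds (m + 0 + ‖Dg a‖ * 0)) := by
      refine Tendsto.add (Tendsto.add tendsto_const_nhds ?_) (Tendsto.const_mul _ ?_)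
      · have h1 : Tendsto (fun n : ℕ => ((φ n : ℝ) + 1)) atTop atTop := by
          apply tendsto_atTop_add_const_right
          exact tendsto_natCast_atTop_atTop.comp hφ.tendsto_atTop
        simpa [Pi.inv_def] using h1.inv_tendsto_atTop
      · have : Tendsto (fun n => y (φ n) - a) atTop (nhds 0) := by
          simpa using (hconv.sub_const a)
        simpa using this.norm
    simpa using ge_of_tendsto hlim (Eventually.of_forall hub)
  intro z hz
  exact key.trans (csInf_le hbdd ⟨z, hz, rfl⟩)

lemma aux_quad_growth {E : Type*} [NormedAddCommGroup E] [InnerProductSpace ℝ E]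
    (X : Set E) (hXcv : Convex ℝ X)
    (g : E → ℝ) (Dg : E → E) (α : ℝ)
    (hsc : ∀ y ∈ X, ∀ z ∈ X, g z + ⟪Dg z, y - z⟫ + α / 2 * ‖y - z‖ ^ 2 ≤ g y)
    (hα : 0 < α) {y : E} (hy : y ∈ X) (hmin : ∀ z ∈ X, g y ≤ g z)
    {z : E} (hz : z ∈ X) : g y + α / 2 * ‖z - y‖ ^ 2 ≤ g z := by
  have hs0 : (0:ℝ) ≤ ‖z - y‖ ^ 2 := by positivity
  have key : ∀ t : ℝ, 0 < t → t ≤ 1 → g y + α / 2 * (1 - t) * ‖z - y‖ ^ 2 ≤ g z := by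
    intro t ht0 ht1
    set w := y + t • (z - y) with hw
    have hwX : w ∈ X := by
      have := hXcv hy hz (by linarith : (0:ℝ) ≤ 1 - t) ht0.le (by ring)
      convert this using 1
      rw [hw]; module
    have h1 := hsc z hz w hwX
    have h2 := hsc y hy w hwX
    have hzw : z - w = (1 - t) • (z - y) := by rw [hw]; module
    have hyw : y - w = (-t) • (z - y) := by rw [hw]; module
    rw [hzw, norm_smul, real_inner_smul_right, Real.norm_eq_abs,
      abs_of_nonneg (by linarith : (0:ℝ) ≤ 1 - t)] at h1
    rw [hyw, norm_smul, real_inner_smul_right, Real.norm_eq_abs, abs_neg,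
      abs_of_nonneg ht0.le] at h2
    have hmw := hmin w hwX
    have h1' := mul_le_mul_of_nonneg_left h1 ht0.le
    have h2' := mul_le_mul_of_nonneg_left h2 (by linarith : (0:ℝ) ≤ 1 - t)
    have h4 : t * (g y + α / 2 * (1 - t) * ‖z - y‖ ^ 2) ≤ t * g z := by nlinarith
    exact (mul_le_mul_iff_right₀ ht0).mp h4
  by_contra hcon
  push_neg at hcon
  set c := g y + α / 2 * ‖z - y‖ ^ 2 - g z with hc
  have hcpos : 0 < c := by simp only [hc]; linarith
  set q := α / 2 * ‖z - y‖ ^ 2 + 1 with hq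
  have hqpos : 0 < q := by positivity
  set t := min 1 (c / q) with ht
  have ht0 : 0 < t := lt_min one_pos (div_pos hcpos hqpos)
  have ht1 : t ≤ 1 := min_le_left _ _
  have h := key t ht0 ht1
  have e1 : t * q ≤ c := by
    have hle := min_le_right 1 (c / q)
    calc t * q ≤ (c / q) * q := mul_le_mul_of_nonneg_right hle hqpos.le
    _ = c := by field_simp
  have e2 : t * q = t * (α / 2 * ‖z - y‖ ^ 2) + t := by rw [hq]; ring
  simp only [hc] at e1
  nlinarith [h, e1, e2, ht0]

lemma aux_telescope {E : Type*} [NormedAddCommGroup E] [InnerProductSpace ℝ E]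
    (X : Set E) (hXcv : Convex ℝ X)
    (f : E → E → ℝ) (Df : E → E → E) (α β : ℝ) (hα : 0 < α)
    (hsc : ∀ x ∈ X, ∀ y ∈ X, ∀ z ∈ X,
      f x z + ⟪Df x z, y - z⟫ + α / 2 * ‖y - z‖ ^ 2 ≤ f x y)
    (hlip : ∀ x' ∈ X, ∀ x ∈ X, ∀ y ∈ X, ‖Df x x' - Df y x'‖ ≤ β * ‖x - y‖)
    {x y tx ty : E} (hx : x ∈ X) (hy : y ∈ X) (htx : tx ∈ X) (hty : ty ∈ X)
    (n : ℕ) (hn : 0 < n) :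
    (f x ty - f y ty) - (f x tx - f y tx) ≤
      β * ‖x - y‖ * ‖ty - tx‖ + ‖Df y ty - Df y tx‖ * ‖ty - tx‖ / n := by
  have hn' : (0:ℝ) < n := by exact_mod_cast hn
  set v := (n:ℝ)⁻¹ • (ty - tx) with hv
  set z : ℕ → E := fun i => tx + (i:ℝ) • v with hz
  have hz0 : z 0 = tx := by simp [hz]
  have hzn : z n = ty := by
    simp only [hz, hv, smul_smul]
    rw [mul_inv_cancel₀ hn'.ne']
    simp
  have hzX : ∀ i : ℕ, i ≤ n → z i ∈ X := by
    intro i hi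
    have h1 : (0:ℝ) ≤ 1 - (i:ℝ)/n := by
      rw [sub_nonneg, div_le_one hn']
      exact_mod_cast hi
    have h2 : (0:ℝ) ≤ (i:ℝ)/n := by positivity
    have := hXcv htx hty h1 h2 (by ring)
    convert this using 1
    simp only [hz, hv, smul_smul]
    rw [div_eq_mul_inv]
    module
  have hstep : ∀ i ∈ Finset.range n,
      (f x (z (i+1)) - f y (z (i+1))) - (f x (z i) - f y (z i)) ≤
        β * ‖x - y‖ * ‖v‖ + (⟪Df y (z (i+1)), v⟫ - ⟪Df y (z i), v⟫) := by
    intro i hi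
    rw [Finset.mem_range] at hi
    have hziX : z i ∈ X := hzX i hi.le
    have hzi1X : z (i+1) ∈ X := hzX (i+1) hi
    have hdiff : z (i+1) - z i = v := by
      simp only [hz]
      push_cast
      module
    have h1 := hsc x hx (z i) hziX (z (i+1)) hzi1X
    have h2 := hsc y hy (z (i+1)) hzi1X (z i) hziX
    have hdiff' : z i - z (i+1) = -v := by rw [← hdiff]; abel
    rw [hdiff'] at h1
    rw [hdiff] at h2
    rw [inner_neg_right, norm_neg] at h1
    have hpos : (0:ℝ) ≤ α / 2 * ‖v‖ ^ 2 := by positivity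
    -- f x (z(i+1)) - f x (z i) ≤ ⟪Df x (z(i+1)), v⟫ ; f y (z i) - f y (z (i+1)) ≤ -⟪Df y (z i), v⟫
    have hcs : ⟪Df x (z (i+1)) - Df y (z (i+1)), v⟫ ≤ β * ‖x - y‖ * ‖v‖ := by
      calc ⟪Df x (z (i+1)) - Df y (z (i+1)), v⟫ ≤ ‖Df x (z (i+1)) - Df y (z (i+1))‖ * ‖v‖ :=
            real_inner_le_norm _ _
      _ ≤ β * ‖x - y‖ * ‖v‖ :=
            mul_le_mul_of_nonneg_right (hlip (z (i+1)) hzi1X x hx y hy) (norm_nonneg _)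
    have hexp : ⟪Df x (z (i+1)) - Df y (z (i+1)), v⟫ =
        ⟪Df x (z (i+1)), v⟫ - ⟪Df y (z (i+1)), v⟫ := inner_sub_left _ _ _
    linarith
  have hsum := Finset.sum_le_sum hstep
  rw [Finset.sum_range_sub (fun i => f x (z i) - f y (z i))] at hsum
  rw [Finset.sum_add_distrib, Finset.sum_const, Finset.card_range,
    Finset.sum_range_sub (fun i => (⟪Df y (z i), v⟫ : ℝ))] at hsum
  rw [hz0, hzn] at hsum
  have hvnorm : ‖v‖ = ‖ty - tx‖ / n := by
    rw [hv, norm_smul, Real.norm_eq_abs, abs_inv, Nat.abs_cast, div_eq_inv_mul]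
  have hinner : ⟪Df y ty, v⟫ - ⟪Df y tx, v⟫ ≤ ‖Df y ty - Df y tx‖ * ‖ty - tx‖ / n := by
    rw [← inner_sub_left]
    calc ⟪Df y ty - Df y tx, v⟫ ≤ ‖Df y ty - Df y tx‖ * ‖v‖ := real_inner_le_norm _ _
    _ = ‖Df y ty - Df y tx‖ * ‖ty - tx‖ / n := by rw [hvnorm]; ring
  have hmain : n • (β * ‖x - y‖ * ‖v‖) = β * ‖x - y‖ * ‖ty - tx‖ := by
    rw [nsmul_eq_mul, hvnorm]
    field_simp
  rw [hmain] at hsum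
  linarith

/-- If `f` is `(α,β)`-regular with `α > 0`, then every `f_x` has a
unique minimizer `T(x)` over `X`, and `T` satisfies
`‖T(x) − T(y)‖ ≤ (β/α)‖x−y‖` for all `x, y ∈ X`. -/
theorem stmt_7
    {E : Type*} [NormedAddCommGroup E] [InnerProductSpace ℝ E] [FiniteDimensional ℝ E]
    (X : Set E) (hXne : X.Nonempty) (hXcp : IsCompact X) (hXcv : Convex ℝ X)
    (f : E → E → ℝ) (Df : E → E → E) (α β : ℝ) (hα : 0 < α) (hβ : 0 ≤ β)
    (hsc : ∀ x ∈ X, ∀ y ∈ X, ∀ z ∈ X,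
      f x z + ⟪Df x z, y - z⟫ + α / 2 * ‖y - z‖ ^ 2 ≤ f x y)
    (hlip : ∀ x' ∈ X, ∀ x ∈ X, ∀ y ∈ X, ‖Df x x' - Df y x'‖ ≤ β * ‖x - y‖) :
    (∀ x ∈ X, ∃! y : E, y ∈ X ∧ ∀ z ∈ X, f x y ≤ f x z)
    ∧
    (∀ x ∈ X, ∀ y ∈ X, ∀ tx ty : E,
      (tx ∈ X ∧ ∀ z ∈ X, f x tx ≤ f x z) →
      (ty ∈ X ∧ ∀ z ∈ X, f y ty ≤ f y z) →
      ‖tx - ty‖ ≤ β / α * ‖x - y‖) := by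
  constructor
  · intro x hx
    obtain ⟨y, hyX, hymin⟩ := aux_exists_min X hXne hXcp (f x) (Df x) α
      (fun a ha b hb => hsc x hx a ha b hb) hα
    refine ⟨y, ⟨hyX, hymin⟩, ?_⟩
    rintro y' ⟨hy'X, hy'min⟩
    have h1 := aux_quad_growth X hXcv (f x) (Df x) α
      (fun a ha b hb => hsc x hx a ha b hb) hα hyX hymin hy'X
    have h2 := hy'min y hyX
    have h3 : ‖y' - y‖ ^ 2 ≤ 0 := by nlinarith
    have h4 : ‖y' - y‖ = 0 := by
      have := sq_nonneg ‖y' - y‖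
      nlinarith [norm_nonneg (y' - y)]
    have : y' - y = 0 := norm_eq_zero.mp h4
    linear_combination (norm := abel) this
  · intro x hx y hy tx ty ⟨htxX, htxmin⟩ ⟨htyX, htymin⟩
    set d := ‖ty - tx‖ with hd
    have hd' : ‖tx - ty‖ = d := norm_sub_rev tx ty
    set δ := ‖x - y‖ with hδ
    have hd0 : 0 ≤ d := norm_nonneg _
    have hδ0 : 0 ≤ δ := norm_nonneg _
    -- quadratic growth at both minimizers
    have hqx := aux_quad_growth X hXcv (f x) (Df x) α
      (fun a ha b hb => hsc x hx a ha b hb) hα htxX htxmin htyX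
    have hqy := aux_quad_growth X hXcv (f y) (Df y) α
      (fun a ha b hb => hsc y hy a ha b hb) hα htyX htymin htxX
    rw [hd'] at hqy
    have hG : α * d ^ 2 ≤ (f x ty - f y ty) - (f x tx - f y tx) := by linarith
    -- telescoping bound
    have htel : ∀ n : ℕ, 0 < n →
        (f x ty - f y ty) - (f x tx - f y tx) ≤
          β * δ * d + ‖Df y ty - Df y tx‖ * d / n :=
      fun n hn => aux_telescope X hXcv f Df α β hα hsc hlip hx hy htxX htyX n hn
    have hkey : α * d ^ 2 ≤ β * δ * d := by
      by_contra hlt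
      push_neg at hlt
      set K := ‖Df y ty - Df y tx‖ * d with hK
      set gap := α * d ^ 2 - β * δ * d with hgap
      have hgap0 : 0 < gap := by simp only [hgap]; linarith
      obtain ⟨N, hN⟩ := exists_nat_gt (K / gap)
      have hN1 : 0 < N + 1 := Nat.succ_pos N
      have h5 := htel (N + 1) hN1
      have hKd : K / (↑(N + 1)) < gap := by
        have hpos : (0:ℝ) < ↑(N + 1) := by exact_mod_cast hN1
        rw [div_lt_iff₀ hpos]
        have h6 : K / gap < ↑(N + 1) := by
          push_cast
          push_cast at hN
          linarith
        calc K = (K / gap) * gap := by field_simp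
        _ < ↑(N + 1) * gap := by
              exact mul_lt_mul_of_pos_right h6 hgap0
        _ = gap * ↑(N + 1) := by ring
      have : α * d ^ 2 ≤ β * δ * d + K / ↑(N + 1) := le_trans hG h5
      simp only [hgap] at hKd
      linarith
    rw [hd']
    rcases eq_or_lt_of_le hd0 with h | h
    · rw [← h]
      positivity
    · rw [div_mul_eq_mul_div, le_div_iff₀ hα]
      nlinarith
end

section
/- Assume Φ(x,x) = 0 for all x ∈ X, Φ(x,·) is convex for every x ∈ X, and Φ is monotone. Then for any points x_1,…,x_N ∈ X, the average x̂_N = (1/N) Σ_{n=1}^N x_n satisfies r_dep(x̂_N) ≤ −(1/N) min_{x∈X} Σ_{n=1}^N Φ(x_n, x); that is, the dual residual of the average iterate is bounded by the average static regret of the online losses l_n(·) = Φ(x_n, ·). -/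
open Bornology Metric

/-- A convex function on a bounded convex set with full affine span is bounded below. -/
lemma bddBelow_image_of_convexOn_span_top {E : Type*} [NormedAddCommGroup E] [NormedSpace ℝ E]
    [FiniteDimensional ℝ E] {X : Set E} (hXb : IsBounded X) (hXcv : Convex ℝ X)
    (hspan : affineSpan ℝ X = ⊤) {f : E → ℝ} (hf : ConvexOn ℝ X f) :
    BddBelow (f '' X) := by
  have hint : (interior X).Nonempty :=
    (hXcv.interior_nonempty_iff_affineSpan_eq_top).2 hspan
  obtain ⟨c, hc⟩ := hint
  obtain ⟨ε, hε, hball⟩ := Metric.isOpen_iff.1 isOpen_interior c hc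
  have hcball : closedBall c (ε/2) ⊆ interior X :=
    (closedBall_subset_ball (by linarith)).trans hball
  have hcX : c ∈ X := interior_subset hc
  -- f is bounded above on the closed ball
  have hcont : ContinuousOn f (closedBall c (ε/2)) :=
    hf.continuousOn_interior.mono hcball
  have hcomp : IsCompact (closedBall c (ε/2)) := isCompact_closedBall c (ε/2)
  obtain ⟨M, hM⟩ := (hcomp.bddAbove_image hcont).imp (fun M hM => hM)
  have hMle : ∀ w ∈ closedBall c (ε/2), f w ≤ M := by
    intro w hw; exact hM ⟨w, hw, rfl⟩
  -- radius bound for X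
  obtain ⟨r, hr⟩ := hXb.subset_closedBall c
  set D : ℝ := max r 1 with hD
  have hD0 : (0:ℝ) < D := lt_of_lt_of_le one_pos (le_max_right _ _)
  set t : ℝ := (ε/2) / D with ht
  have ht0 : 0 < t := div_pos (by linarith) hD0
  refine ⟨((1 + t) * f c - M) / t, ?_⟩
  rintro _ ⟨z, hz, rfl⟩
  -- reflected point
  set w : E := c + t • (c - z) with hw
  have hwball : w ∈ closedBall c (ε/2) := by
    rw [mem_closedBall, dist_eq_norm]
    have : w - c = t • (c - z) := by rw [hw]; abel
    rw [this, norm_smul, Real.norm_eq_abs, abs_of_pos ht0]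
    have hzc : ‖c - z‖ ≤ D := by
      have h1 : z ∈ closedBall c r := hr hz
      rw [mem_closedBall, dist_eq_norm] at h1
      calc ‖c - z‖ = ‖z - c‖ := by rw [norm_sub_rev]
        _ ≤ r := h1
        _ ≤ D := le_max_left _ _
    calc t * ‖c - z‖ ≤ t * D := by nlinarith
      _ = ε/2 := by rw [ht]; field_simp
  have hwX : w ∈ X := interior_subset (hcball hwball)
  -- c is a convex combination of w and z
  have hcomb : (1/(1+t)) • w + (t/(1+t)) • z = c := by
    have h1t : (1:ℝ) + t ≠ 0 := by positivity
    rw [hw, smul_add, smul_smul, smul_sub]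
    rw [show (1/(1+t)) * t = t/(1+t) by ring]
    match_scalars <;> field_simp <;> ring
  have hkey := hf.2 hwX hz (by positivity : (0:ℝ) ≤ 1/(1+t))
    (by positivity : (0:ℝ) ≤ t/(1+t)) (by field_simp)
  rw [hcomb] at hkey
  have hfw : f w ≤ M := hMle w hwball
  rw [div_le_iff₀ ht0]
  have h1t : (0:ℝ) < 1 + t := by positivity
  simp only [smul_eq_mul] at hkey
  have hkey2 : (1 + t) * f c ≤ f w + t * f z := by
    have := mul_le_mul_of_nonneg_left hkey h1t.le
    calc (1 + t) * f c = (1 + t) * f c := rfl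
      _ ≤ (1 + t) * (1 / (1 + t) * f w + t / (1 + t) * f z) := this
      _ = f w + t * f z := by field_simp
  nlinarith [hkey2, hfw]

/-- A convex function on a nonempty bounded convex set in a finite-dimensional space
is bounded below. -/
lemma bddBelow_image_of_convexOn {E : Type*} [NormedAddCommGroup E] [NormedSpace ℝ E]
    [FiniteDimensional ℝ E] {X : Set E} (hXne : X.Nonempty) (hXb : IsBounded X)
    (hXcv : Convex ℝ X) {f : E → ℝ} (hf : ConvexOn ℝ X f) :
    BddBelow (f '' X) := by
  obtain ⟨c, hc⟩ := hXne
  set V : Submodule ℝ E := vectorSpan ℝ X with hV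
  let e : V →ᵃ[ℝ] E :=
    ((AffineEquiv.constVAdd ℝ E c).toAffineMap).comp V.subtype.toAffineMap
  have he : ∀ v : V, e v = c + (v : E) := fun v => rfl
  set X' : Set V := e ⁻¹' X with hX'
  have hmem : ∀ {y : E}, y ∈ X → y - c ∈ V := fun hy => vsub_mem_vectorSpan ℝ hy hc
  have hmemX' : ∀ {y : E} (hy : y ∈ X), (⟨y - c, hmem hy⟩ : V) ∈ X' := by
    intro y hy
    simp only [hX', Set.mem_preimage, he]
    simpa [add_sub_cancel] using hy
  have h0 : (0 : V) ∈ X' := by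
    have := hmemX' hc; convert this using 1; exact Subtype.ext (by simp)
  have hX'cv : Convex ℝ X' := hXcv.affine_preimage e
  have hf' : ConvexOn ℝ X' (f ∘ e) := hf.comp_affineMap e
  -- full span
  have hkey : V ≤ Submodule.map V.subtype (vectorSpan ℝ X') := by
    show vectorSpan ℝ X ≤ _
    rw [vectorSpan_def]
    apply Submodule.span_le.2
    rintro u hu
    rw [Set.mem_vsub] at hu
    obtain ⟨a, ha, b, hb, rfl⟩ := hu
    refine ⟨(⟨a - c, hmem ha⟩ : V) - ⟨b - c, hmem hb⟩, ?_, by simp⟩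
    exact vsub_mem_vectorSpan ℝ (hmemX' ha) (hmemX' hb)
  have hspan' : vectorSpan ℝ X' = ⊤ := by
    rw [eq_top_iff]
    intro w _
    obtain ⟨u, hu, huw⟩ := hkey w.2
    rwa [show u = w from Subtype.ext huw] at hu
  have hspan : affineSpan ℝ X' = ⊤ := by
    rw [AffineSubspace.affineSpan_eq_top_iff_vectorSpan_eq_top_of_nonempty ℝ V V ⟨0, h0⟩]
    exact hspan'
  -- boundedness
  obtain ⟨R, hR⟩ := Bornology.IsBounded.exists_norm_le hXb
  have hX'b : IsBounded X' := by
    rw [isBounded_iff_forall_norm_le]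
    refine ⟨R + ‖c‖, fun v hv => ?_⟩
    have : (v : E) = e v - c := by rw [he]; abel
    have h2 : ‖v‖ = ‖(v : E)‖ := rfl
    rw [h2, this]
    calc ‖e v - c‖ ≤ ‖e v‖ + ‖c‖ := norm_sub_le _ _
      _ ≤ R + ‖c‖ := by have := hR (e v) hv; linarith
  obtain ⟨B, hB⟩ := bddBelow_image_of_convexOn_span_top hX'b hX'cv hspan hf'
  refine ⟨B, ?_⟩
  rintro _ ⟨y, hy, rfl⟩
  have : f y = (f ∘ e) ⟨y - c, hmem hy⟩ := by
    simp [he, add_sub_cancel]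
  rw [this]
  exact hB ⟨_, hmemX' hy, rfl⟩

open scoped RealInnerProductSpace

/-- If `Φ(x,x) = 0`, `Φ(x,·)` is convex, and `Φ` is monotone, then for
any `x_1,…,x_N ∈ X` the average `x̂_N = (1/N) Σ x_n` satisfies
`r_dep(x̂_N) ≤ −(1/N) min_{x∈X} Σ_n Φ(x_n, x)`. -/
theorem stmt_8
    {E : Type*} [NormedAddCommGroup E] [InnerProductSpace ℝ E] [FiniteDimensional ℝ E]
    (X : Set E) (hXne : X.Nonempty) (hXcp : IsCompact X) (hXcv : Convex ℝ X)
    (Φ : E → E → ℝ)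
    (hdiag : ∀ x ∈ X, Φ x x = 0)
    (hconv : ∀ x ∈ X, ConvexOn ℝ X (Φ x))
    (hmono : ∀ x ∈ X, ∀ x' ∈ X, Φ x x' + Φ x' x ≤ 0)
    (N : ℕ) (hN : 0 < N) (x : Fin N → E) (hx : ∀ n, x n ∈ X) :
    sSup ((fun z => Φ z ((N : ℝ)⁻¹ • ∑ n, x n)) '' X)
      ≤ -((N : ℝ)⁻¹ * sInf ((fun z => ∑ n, Φ (x n) z) '' X)) := by
  have hN0 : ((N : ℝ)) ≠ 0 := Nat.cast_ne_zero.2 hN.ne'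
  have hNinv : (0:ℝ) ≤ (N : ℝ)⁻¹ := by positivity
  have hwsum : ∑ _n : Fin N, (N : ℝ)⁻¹ = 1 := by
    simp [Finset.sum_const, Finset.card_univ]
    field_simp
  -- the sum function is convex
  have hgconv : ConvexOn ℝ X (fun z => ∑ n, Φ (x n) z) := by
    classical
    have key : ∀ (t : Finset (Fin N)), ConvexOn ℝ X (fun z => ∑ n ∈ t, Φ (x n) z) := by
      intro t
      induction t using Finset.cons_induction with
      | empty => simpa using convexOn_const (0:ℝ) hXcv
      | cons i t hi ih =>
        simp only [Finset.sum_cons]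
        exact (hconv _ (hx i)).add ih
    exact key Finset.univ
  have hSbdd : BddBelow ((fun z => ∑ n, Φ (x n) z) '' X) :=
    bddBelow_image_of_convexOn hXne hXcp.isBounded hXcv hgconv
  refine csSup_le (hXne.image _) ?_
  rintro _ ⟨z, hz, rfl⟩
  -- Jensen
  have jensen : Φ z ((N : ℝ)⁻¹ • ∑ n, x n) ≤ (N : ℝ)⁻¹ * ∑ n, Φ z (x n) := by
    rw [Finset.smul_sum, Finset.mul_sum]
    exact (hconv z hz).map_sum_le (fun i _ => hNinv) hwsum (fun i _ => hx i)
  -- monotonicity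
  have hmonosum : ∑ n, Φ z (x n) ≤ -(∑ n, Φ (x n) z) := by
    rw [← Finset.sum_neg_distrib]
    exact Finset.sum_le_sum fun i _ => by
      have := hmono z hz (x i) (hx i); linarith
  have hinf : sInf ((fun z => ∑ n, Φ (x n) z) '' X) ≤ ∑ n, Φ (x n) z :=
    csInf_le hSbdd ⟨z, hz, rfl⟩
  calc Φ z ((N : ℝ)⁻¹ • ∑ n, x n) ≤ (N : ℝ)⁻¹ * ∑ n, Φ z (x n) := jensen
    _ ≤ (N : ℝ)⁻¹ * (-(∑ n, Φ (x n) z)) := mul_le_mul_of_nonneg_left hmonosum hNinv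
    _ = -((N : ℝ)⁻¹ * ∑ n, Φ (x n) z) := by ring
    _ ≤ -((N : ℝ)⁻¹ * sInf ((fun z => ∑ n, Φ (x n) z) '' X)) := by
        have := mul_le_mul_of_nonneg_left hinf hNinv
        linarith
end

section
/- Assume Φ(x,x) = 0 for all x ∈ X, Φ(x,·) is convex for every x ∈ X, and Φ(·,x) is L-Lipschitz for every x ∈ X (|Φ(z,x) − Φ(y,x)| ≤ L‖z−y‖ for all y,z ∈ X). If x ∈ X satisfies r_dep(x) ≤ 2 L D_X, then r_ep(x) ≤ 2 √(2 L D_X) · √(r_dep(x)). -/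
open scoped RealInnerProductSpace

/-- If `Φ(x,x) = 0`, `Φ(x,·)` is convex, and `Φ(·,x)` is `L`-Lipschitz,
then for `x ∈ X` with `r_dep(x) ≤ 2 L D_X` we have
`r_ep(x) ≤ 2 √(2 L D_X) √(r_dep(x))`. -/
theorem stmt_10
    {E : Type*} [NormedAddCommGroup E] [InnerProductSpace ℝ E] [FiniteDimensional ℝ E]
    (X : Set E) (hXne : X.Nonempty) (hXcp : IsCompact X) (hXcv : Convex ℝ X)
    (Φ : E → E → ℝ) (L : ℝ) (hL : 0 ≤ L)
    (hdiag : ∀ x ∈ X, Φ x x = 0)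
    (hconv : ∀ x ∈ X, ConvexOn ℝ X (Φ x))
    (hlip : ∀ x ∈ X, ∀ y ∈ X, ∀ z ∈ X, |Φ z x - Φ y x| ≤ L * ‖z - y‖)
    (x : E) (hx : x ∈ X)
    (hrd : sSup ((fun z => Φ z x) '' X) ≤ 2 * L * Metric.diam X) :
    sSup ((fun x' => -Φ x x') '' X)
      ≤ 2 * Real.sqrt (2 * L * Metric.diam X) * Real.sqrt (sSup ((fun z => Φ z x) '' X)) := by
  set D := Metric.diam X with hDdef
  have hD : 0 ≤ D := Metric.diam_nonneg
  set r := sSup ((fun z => Φ z x) '' X) with hrdef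
  have hbound : ∀ z ∈ X, Φ z x ≤ L * D := by
    intro z hz
    have h1 := hlip x hx x hx z hz
    rw [hdiag x hx, sub_zero] at h1
    have h2 : ‖z - x‖ ≤ D := by
      rw [← dist_eq_norm]
      exact Metric.dist_le_diam_of_mem hXcp.isBounded hz hx
    calc Φ z x ≤ |Φ z x| := le_abs_self _
      _ ≤ L * ‖z - x‖ := h1
      _ ≤ L * D := by nlinarith
  have hbdd : BddAbove ((fun z => Φ z x) '' X) := by
    refine ⟨L * D, ?_⟩
    rintro _ ⟨z, hz, rfl⟩
    exact hbound z hz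
  have hr0 : 0 ≤ r := by
    have := le_csSup hbdd ⟨x, hx, rfl⟩
    simpa [hdiag x hx] using this
  -- key inequality
  have key : ∀ x' ∈ X, ∀ t : ℝ, 0 < t → t ≤ 1 → -Φ x x' ≤ r / t + L * D * t := by
    intro x' hx' t ht0 ht1
    set y := (1 - t) • x + t • x' with hydef
    have hy : y ∈ X := hXcv hx hx' (by linarith) ht0.le (by ring)
    have hc := (hconv y hy).2 hx hx' (show (0:ℝ) ≤ 1 - t by linarith) ht0.le
      (show (1 - t) + t = 1 by ring)
    rw [← hydef, hdiag y hy] at hc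
    have hyx : Φ y x ≤ r := le_csSup hbdd ⟨y, hy, rfl⟩
    have hnym : ‖y - x‖ = t * ‖x' - x‖ := by
      have : y - x = t • (x' - x) := by
        rw [hydef]; module
      rw [this, norm_smul, Real.norm_eq_abs, abs_of_pos ht0]
    have hnx : ‖x' - x‖ ≤ D := by
      rw [← dist_eq_norm]
      exact Metric.dist_le_diam_of_mem hXcp.isBounded hx' hx
    have h3 : |Φ y x' - Φ x x'| ≤ L * (t * D) := by
      calc |Φ y x' - Φ x x'| ≤ L * ‖y - x‖ := hlip x' hx' x hx y hy
        _ = L * (t * ‖x' - x‖) := by rw [hnym]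
        _ ≤ L * (t * D) := by gcongr
    have h4 := (abs_le.mp h3).2
    -- hc : 0 ≤ (1-t) • Φ y x + t • Φ y x'
    simp only [smul_eq_mul] at hc
    have h5 : -Φ y x' ≤ (1 - t) * r / t := by
      rw [le_div_iff₀ ht0]
      nlinarith
    have h6 : (1 - t) * r / t ≤ r / t := by
      gcongr
      nlinarith
    calc -Φ x x' = -Φ y x' + (Φ y x' - Φ x x') := by ring
      _ ≤ (1 - t) * r / t + L * (t * D) := by linarith
      _ ≤ r / t + L * D * t := by linarith
  apply Real.sSup_le
  · rintro _ ⟨x', hx', rfl⟩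
    show -Φ x x' ≤ 2 * Real.sqrt (2 * L * D) * Real.sqrt r
    rcases eq_or_lt_of_le hr0 with hr | hr
    · -- r = 0
      rw [← hr, Real.sqrt_zero, mul_zero]
      by_cases hLD : L * D = 0
      · have := key x' hx' 1 one_pos le_rfl
        rw [← hr] at this
        simpa [hLD] using this
      · have hLD' : 0 < L * D := lt_of_le_of_ne (mul_nonneg hL hD) (Ne.symm hLD)
        have hmain : ∀ ε > (0:ℝ), -Φ x x' ≤ 0 + ε := by
          intro ε hε
          set t := min 1 (ε / (L * D)) with htdef
          have ht0 : 0 < t := lt_min one_pos (div_pos hε hLD')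
          have ht1 : t ≤ 1 := min_le_left _ _
          have hk := key x' hx' t ht0 ht1
          rw [← hr, zero_div, zero_add] at hk
          have h2 : L * D * t ≤ ε := by
            have hmin : t ≤ ε / (L * D) := min_le_right _ _
            calc L * D * t ≤ L * D * (ε / (L * D)) := by nlinarith
              _ = ε := by field_simp; exact div_self hLD'.ne'
          linarith
        exact le_of_forall_pos_le_add hmain |>.trans (by norm_num)
    · -- r > 0
      have hLD : 0 < L * D := by nlinarith [hrd]
      set t := Real.sqrt (r / (2 * L * D)) with htdef
      have hfrac : 0 < r / (2 * L * D) := div_pos hr (by linarith)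
      have ht0 : 0 < t := Real.sqrt_pos.mpr hfrac
      have ht1 : t ≤ 1 := by
        rw [htdef, show (1:ℝ) = Real.sqrt 1 by rw [Real.sqrt_one]]
        apply Real.sqrt_le_sqrt
        rw [div_le_one (by linarith)]
        exact hrd
      have hkey := key x' hx' t ht0 ht1
      have hrt : r = t ^ 2 * (2 * L * D) := by
        rw [htdef, Real.sq_sqrt hfrac.le,
          div_mul_cancel₀ _ (ne_of_gt (show (0:ℝ) < 2 * L * D by linarith))]
      have hsr : Real.sqrt r = t * Real.sqrt (2 * L * D) := by
        rw [hrt, Real.sqrt_mul (sq_nonneg t), Real.sqrt_sq ht0.le]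
      have hu : Real.sqrt (2 * L * D) * Real.sqrt (2 * L * D) = 2 * L * D :=
        Real.mul_self_sqrt (by linarith)
      have hdiv : t ^ 2 * (2 * L * D) / t = t * (2 * L * D) := by
        field_simp
      refine hkey.trans ?_
      rw [hsr]
      rw [hrt, hdiv]
      nlinarith [ht0, hu]
  · positivity
end

section
/- Assume Φ(x,x) = 0 for all x ∈ X, Φ(·,x) is L-Lipschitz for every x ∈ X (|Φ(z,x) − Φ(y,x)| ≤ L‖z−y‖ for all y,z ∈ X), and Φ(x,·) is μ-strongly convex for every x ∈ X with μ > 0. If x ∈ X satisfies r_dep(x) ≤ L²/μ, then r_ep(x) ≤ 2.8 (L²/μ)^{1/3} · r_dep(x)^{2/3}. -/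
open scoped RealInnerProductSpace

set_option maxHeartbeats 1600000 in
/-- If `Φ(x,x) = 0`, `Φ(·,x)` is `L`-Lipschitz, and `Φ(x,·)` is
`μ`-strongly convex with `μ > 0`, then for `x ∈ X` with `r_dep(x) ≤ L²/μ` we have
`r_ep(x) ≤ 2.8 (L²/μ)^{1/3} r_dep(x)^{2/3}`. -/
theorem stmt_11
    {E : Type*} [NormedAddCommGroup E] [InnerProductSpace ℝ E] [FiniteDimensional ℝ E]
    (X : Set E) (hXne : X.Nonempty) (hXcp : IsCompact X) (hXcv : Convex ℝ X)
    (Φ : E → E → ℝ) (L μ : ℝ) (hL : 0 ≤ L) (hμ : 0 < μ)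
    (hdiag : ∀ x ∈ X, Φ x x = 0)
    (hlip : ∀ x ∈ X, ∀ y ∈ X, ∀ z ∈ X, |Φ z x - Φ y x| ≤ L * ‖z - y‖)
    (hsconv : ∀ x ∈ X, StrongConvexOn X μ (Φ x))
    (x : E) (hx : x ∈ X)
    (hrd : sSup ((fun z => Φ z x) '' X) ≤ L ^ 2 / μ) :
    sSup ((fun x' => -Φ x x') '' X)
      ≤ 2.8 * (L ^ 2 / μ) ^ ((1 : ℝ) / 3) * sSup ((fun z => Φ z x) '' X) ^ ((2 : ℝ) / 3) := by
  set C : ℝ := L ^ 2 / μ with hCdef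
  set ε : ℝ := sSup ((fun z => Φ z x) '' X) with hεdef
  clear_value C ε
  have hCnn : 0 ≤ C := by rw [hCdef]; positivity
  -- boundedness of X
  obtain ⟨M, hM⟩ := Metric.isBounded_iff.mp hXcp.isBounded
  -- BddAbove of the dual residual set
  have hbdd : BddAbove ((fun z => Φ z x) '' X) := by
    refine ⟨L * M, ?_⟩
    rintro b ⟨z, hz, rfl⟩
    have h1 := hlip x hx x hx z hz
    rw [hdiag x hx, sub_zero] at h1
    have h2 : ‖z - x‖ ≤ M := by
      have := hM hz hx
      rwa [dist_eq_norm] at this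
    have := (abs_le.mp h1).2
    have hLM : L * ‖z - x‖ ≤ L * M := by
      exact mul_le_mul_of_nonneg_left h2 hL
    linarith
  have hε0 : 0 ≤ ε := by
    have := le_csSup hbdd ⟨x, hx, rfl⟩
    simp only [hdiag x hx] at this
    rw [hεdef]; exact this
  -- key inequality
  have key : ∀ x' ∈ X, ∀ t : ℝ, 0 < t → t < 1 →
      -Φ x x' ≤ ε / t + t ^ 2 * C / (2 * (1 - t)) := by
    intro x' hx' t ht htlt
    have h1t : (0 : ℝ) < 1 - t := by linarith
    set y : E := (1 - t) • x + t • x' with hydef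
    have hy : y ∈ X := hXcv hx hx' h1t.le ht.le (by ring)
    set d : ℝ := ‖x - x'‖ with hddef
    have hd : 0 ≤ d := norm_nonneg _
    -- strong convexity
    have hsc := (hsconv y hy).2 hx hx' h1t.le ht.le (by ring)
    rw [← hydef, hdiag y hy] at hsc
    simp only [smul_eq_mul] at hsc
    -- Lipschitz
    have hnorm : ‖y - x‖ = t * d := by
      have h : y - x = t • (x' - x) := by
        rw [hydef]; module
      rw [h, norm_smul, Real.norm_eq_abs, abs_of_pos ht, hddef, norm_sub_rev]
    have hB : Φ y x' - Φ x x' ≤ L * (t * d) := by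
      have := (abs_le.mp (hlip x' hx' x hx y hy)).2
      rwa [hnorm] at this
    have hA : Φ y x ≤ ε := by rw [hεdef]; exact le_csSup hbdd ⟨y, hy, rfl⟩
    -- linearize products
    have h2 : (1 - t) * Φ y x ≤ (1 - t) * ε := mul_le_mul_of_nonneg_left hA h1t.le
    have h3 : t * Φ y x' ≤ t * (Φ x x' + L * (t * d)) :=
      mul_le_mul_of_nonneg_left (by linarith) ht.le
    have h4 : 0 ≤ (1 - t) * ε + t * Φ x x' + L * t ^ 2 * d - (1 - t) * t * (μ / 2 * d ^ 2) := by
      nlinarith [hsc, h2, h3]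
    have h5 : 0 ≤ t * (t * L - μ * (1 - t) * d) ^ 2 := by positivity
    have h6 : 0 ≤ 2 * μ * (1 - t) *
        ((1 - t) * ε + t * Φ x x' + L * t ^ 2 * d - (1 - t) * t * (μ / 2 * d ^ 2)) :=
      mul_nonneg (by positivity) h4
    have h7 : 2 * μ * (1 - t) ^ 2 * ε ≤ 2 * μ * (1 - t) * ε := by
      nlinarith [mul_nonneg (mul_nonneg (mul_nonneg hμ.le h1t.le) hε0) ht.le]
    have key1 : -Φ x x' * (2 * μ * (1 - t) * t) ≤ ε * (2 * μ * (1 - t)) + t ^ 3 * L ^ 2 := by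
      nlinarith [h5, h6, h7]
    have heq : ε / t + t ^ 2 * C / (2 * (1 - t))
        = (ε * (2 * μ * (1 - t)) + t ^ 3 * L ^ 2) / (2 * μ * (1 - t) * t) := by
      rw [hCdef]
      field_simp
    rw [heq, le_div_iff₀ (by positivity)]
    exact key1
  -- the supremum bound
  have hεC : ε ≤ C := hrd
  refine csSup_le (hXne.image _) ?_
  rintro b ⟨x', hx', rfl⟩
  dsimp only
  rcases eq_or_lt_of_le hε0 with hε | hε
  · -- ε = 0 case
    have hrhs : 2.8 * C ^ ((1 : ℝ) / 3) * ε ^ ((2 : ℝ) / 3) = 2.8 * C ^ ((1 : ℝ) / 3) * 0 := by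
      rw [← hε, Real.zero_rpow (by norm_num)]
    rw [hrhs, mul_zero]
    refine le_of_forall_pos_le_add ?_
    intro η hη
    set t : ℝ := min (1 / 2) (Real.sqrt (η / (C + 1))) with htdef
    clear_value t
    have hsq : 0 < Real.sqrt (η / (C + 1)) := Real.sqrt_pos.mpr (by positivity)
    have ht : 0 < t := by rw [htdef]; exact lt_min (by norm_num) hsq
    have ht2 : t ≤ 1 / 2 := by rw [htdef]; exact min_le_left _ _
    have h1 := key x' hx' t ht (by linarith)
    rw [← hε] at h1
    have h2 : t ^ 2 * C / (2 * (1 - t)) ≤ t ^ 2 * C :=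
      div_le_self (mul_nonneg (sq_nonneg t) hCnn) (by linarith)
    have h3 : t ^ 2 ≤ η / (C + 1) := by
      have := min_le_right (1 / 2) (Real.sqrt (η / (C + 1)))
      rw [← htdef] at this
      calc t ^ 2 ≤ Real.sqrt (η / (C + 1)) ^ 2 := by
            apply pow_le_pow_left₀ ht.le this
        _ = η / (C + 1) := Real.sq_sqrt (by positivity)
    have h4 : t ^ 2 * C ≤ η := by
      have : t ^ 2 * C ≤ η / (C + 1) * C := mul_le_mul_of_nonneg_right h3 hCnn
      have h5 : η / (C + 1) * C ≤ η := by
        rw [div_mul_eq_mul_div, div_le_iff₀ (by positivity)]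
        nlinarith
      linarith
    have h6 : (0 : ℝ) / t = 0 := zero_div t
    rw [h6] at h1
    linarith
  · -- ε > 0 case
    have hCpos : 0 < C := lt_of_lt_of_le hε hεC
    set r : ℝ := (ε / C) ^ ((1 : ℝ) / 3) with hrdef
    clear_value r
    have hrpos : 0 < r := by
      rw [hrdef]; exact Real.rpow_pos_of_pos (div_pos hε hCpos) _
    have hr3 : r ^ 3 = ε / C := by
      rw [hrdef, ← Real.rpow_natCast ((ε / C) ^ ((1 : ℝ) / 3)) 3,
        ← Real.rpow_mul (div_nonneg hε0 hCnn)]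
      norm_num
    have hεeq : ε = C * r ^ 3 := by
      rw [hr3]; field_simp
    have hrle1 : r ≤ 1 := by
      rw [hrdef]
      exact Real.rpow_le_one (div_nonneg hε0 hCnn) (by rw [div_le_one hCpos]; exact hεC)
        (by norm_num)
    set t : ℝ := r / 2 with htdef
    clear_value t
    have ht : 0 < t := by rw [htdef]; exact div_pos hrpos two_pos
    have ht2 : t ≤ 1 / 2 := by rw [htdef]; linarith
    have h1 := key x' hx' t ht (by linarith)
    have h2 : t ^ 2 * C / (2 * (1 - t)) ≤ t ^ 2 * C :=
      div_le_self (mul_nonneg (sq_nonneg t) hCnn) (by linarith)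
    have h3 : ε / t = 2 * C * r ^ 2 := by
      rw [hεeq, htdef]
      field_simp
    have h4 : t ^ 2 * C = C * r ^ 2 / 4 := by rw [htdef]; ring
    have h5 : -Φ x x' ≤ 2.25 * C * r ^ 2 := by linarith
    have e2 : C ^ ((1 : ℝ) / 3) * C ^ ((2 : ℝ) / 3) = C := by
      rw [← Real.rpow_add hCpos]; norm_num
    have e3 : ε ^ ((2 : ℝ) / 3) = C ^ ((2 : ℝ) / 3) * r ^ 2 := by
      rw [hεeq, Real.mul_rpow hCpos.le (pow_nonneg hrpos.le 3),
        ← Real.rpow_natCast r 3, ← Real.rpow_mul hrpos.le]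
      norm_num [Real.rpow_two]
    have h6 : 2.8 * C ^ ((1 : ℝ) / 3) * ε ^ ((2 : ℝ) / 3) = 2.8 * C * r ^ 2 := by
      rw [e3, show (2.8 : ℝ) * C ^ ((1 : ℝ) / 3) * (C ^ ((2 : ℝ) / 3) * r ^ 2)
        = C ^ ((1 : ℝ) / 3) * C ^ ((2 : ℝ) / 3) * (2.8 * r ^ 2) from by ring, e2]
      ring
    rw [h6]
    linarith [h5, mul_nonneg hCpos.le (sq_nonneg r)]
end

section
/- Suppose f is (α,β)-regular with α > 0, ‖∇f_x(x)‖ ≤ G for all x ∈ X, and x* ∈ X solves VI(X,F). Then for any sequence x_1,…,x_N ∈ X, with Δ_n = ‖x_n − x*‖, the dynamic regret satisfies Regret^d_N ≤ min{ G Σ_{n=1}^N Δ_n, Regret^s_N(x*) } + Σ_{n=1}^N min{ β D_X Δ_n, (β²/(2α)) Δ_n² }. -/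
/-!
Split each round's dynamic regret as `(l_n(x_n) - l_n(x*)) + (l_n(x*) - min l_n)`. The first
term is at most `G Δ_n` by convexity of `l_n`. For the second, `∇l_n(x*)` differs from `F(x*)`
by at most `β Δ_n`, so the variational inequality at `x*` makes the linear part of `l_n` around
`x*` at least `-β Δ_n t` at distance `t`; strong convexity then gives
`l_n(x*) - l_n(y) ≤ β Δ_n t - (α/2) t²`, which is at most both `β Δ_n D_X` and `(β Δ_n)²/(2α)`.
-/

open scoped RealInnerProductSpace

lemma mul_sub_half_mul_sq_le_min {a t D α : ℝ} (hα : 0 < α) (ha : 0 ≤ a) (htD : t ≤ D) :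
    a * t - α / 2 * t ^ 2 ≤ min (a * D) (a ^ 2 / (2 * α)) := by
  refine le_min ?_ ?_
  · nlinarith [mul_le_mul_of_nonneg_left htD ha, sq_nonneg t]
  · rw [le_div_iff₀ (by positivity)]
    nlinarith [sq_nonneg (α * t - a)]

section

variable {E : Type*} [NormedAddCommGroup E] [InnerProductSpace ℝ E]

lemma sub_le_mul_norm_of_le_add_inner {g : E → ℝ} {d x y : E} {G : ℝ}
    (hg : g x + ⟪d, y - x⟫ ≤ g y) (hd : ‖d‖ ≤ G) : g x - g y ≤ G * ‖x - y‖ := by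
  have hinner : ⟪d, x - y⟫ ≤ G * ‖x - y‖ :=
    (real_inner_le_norm d (x - y)).trans (mul_le_mul_of_nonneg_right hd (norm_nonneg _))
  rw [← neg_sub x y, inner_neg_right] at hg
  linarith

lemma sub_sInf_image_le_of_variational_inequality {X : Set E} (hX : Bornology.IsBounded X)
    {g : E → ℝ} {d v xs : E} (hxs : xs ∈ X) {α L : ℝ} (hα : 0 < α) (hdv : ‖d - v‖ ≤ L)
    (hsc : ∀ y ∈ X, g xs + ⟪d, y - xs⟫ + α / 2 * ‖y - xs‖ ^ 2 ≤ g y)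
    (hVI : ∀ y ∈ X, 0 ≤ ⟪v, y - xs⟫) :
    g xs - sInf (g '' X) ≤ min (L * Metric.diam X) (L ^ 2 / (2 * α)) := by
  suffices h : ∀ y ∈ X, g xs - min (L * Metric.diam X) (L ^ 2 / (2 * α)) ≤ g y by
    have := le_csInf (Set.Nonempty.image g ⟨xs, hxs⟩) (Set.forall_mem_image.2 h)
    linarith
  intro y hy
  have hL : 0 ≤ L := (norm_nonneg _).trans hdv
  have hdist : ‖y - xs‖ ≤ Metric.diam X := by
    rw [← dist_eq_norm]
    exact Metric.dist_le_diam_of_mem hX hy hxs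
  have hperturb : -(L * ‖y - xs‖) ≤ ⟪d - v, y - xs⟫ :=
    (neg_le_neg (mul_le_mul_of_nonneg_right hdv (norm_nonneg _))).trans
      (neg_le_of_abs_le (abs_real_inner_le_norm _ _))
  have hlinear : -(L * ‖y - xs‖) ≤ ⟪d, y - xs⟫ := by
    rw [inner_sub_left] at hperturb
    linarith [hVI y hy]
  linarith [hsc y hy, mul_sub_half_mul_sq_le_min hα hL hdist]

end

theorem stmt_12_general
    {E : Type*} [NormedAddCommGroup E] [InnerProductSpace ℝ E]
    (X : Set E) (hXcp : IsCompact X)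
    (f : E → E → ℝ) (Df : E → E → E) (α β G : ℝ) (hα : 0 < α)
    (hsc : ∀ x ∈ X, ∀ y ∈ X, ∀ z ∈ X,
      f x z + ⟪Df x z, y - z⟫ + α / 2 * ‖y - z‖ ^ 2 ≤ f x y)
    (hlip : ∀ x' ∈ X, ∀ x ∈ X, ∀ y ∈ X, ‖Df x x' - Df y x'‖ ≤ β * ‖x - y‖)
    (hG : ∀ x ∈ X, ‖Df x x‖ ≤ G)
    (xs : E) (hxs : xs ∈ X)
    (hVI : ∀ x ∈ X, 0 ≤ ⟪Df xs xs, x - xs⟫)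
    (N : ℕ) (x : Fin N → E) (hx : ∀ n, x n ∈ X) :
    ∑ n, (f (x n) (x n) - sInf (f (x n) '' X))
      ≤ min (G * ∑ n, ‖x n - xs‖) (∑ n, (f (x n) (x n) - f (x n) xs))
        + ∑ n, min (β * Metric.diam X * ‖x n - xs‖) (β ^ 2 / (2 * α) * ‖x n - xs‖ ^ 2) := by
  have hstatic : ∀ n, f (x n) (x n) - f (x n) xs ≤ G * ‖x n - xs‖ := fun n =>
    sub_le_mul_norm_of_le_add_inner
      (by nlinarith [hsc (x n) (hx n) xs hxs (x n) (hx n), sq_nonneg ‖xs - x n‖])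
      (hG (x n) (hx n))
  have hgap : ∀ n, f (x n) xs - sInf (f (x n) '' X)
      ≤ min (β * Metric.diam X * ‖x n - xs‖) (β ^ 2 / (2 * α) * ‖x n - xs‖ ^ 2) := by
    intro n
    convert sub_sInf_image_le_of_variational_inequality hXcp.isBounded hxs hα
      (hlip xs hxs (x n) (hx n) xs hxs) (fun y hy => hsc (x n) (hx n) y hy xs hxs) hVI
      using 2 <;> ring
  calc ∑ n, (f (x n) (x n) - sInf (f (x n) '' X))
      = ∑ n, (f (x n) (x n) - f (x n) xs) + ∑ n, (f (x n) xs - sInf (f (x n) '' X)) := by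
        simp only [← Finset.sum_add_distrib, sub_add_sub_cancel]
    _ ≤ _ := add_le_add
        (le_min (by rw [Finset.mul_sum]; exact Finset.sum_le_sum fun n _ => hstatic n) le_rfl)
        (Finset.sum_le_sum fun n _ => hgap n)

/-- If `f` is `(α,β)`-regular with `α > 0`, `‖∇f_x(x)‖ ≤ G` on `X`,
and `x*` solves VI(X,F), then for any sequence `x_1,…,x_N ∈ X`, with
`Δ_n = ‖x_n − x*‖`,
`Regret^d_N ≤ min{G Σ Δ_n, Regret^s_N(x*)} + Σ min{β D_X Δ_n, (β²/(2α)) Δ_n²}`. -/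
theorem stmt_12
    {E : Type*} [NormedAddCommGroup E] [InnerProductSpace ℝ E] [FiniteDimensional ℝ E]
    (X : Set E) (hXne : X.Nonempty) (hXcp : IsCompact X) (hXcv : Convex ℝ X)
    (f : E → E → ℝ) (Df : E → E → E) (α β G : ℝ) (hα : 0 < α) (hβ : 0 ≤ β)
    (hsc : ∀ x ∈ X, ∀ y ∈ X, ∀ z ∈ X,
      f x z + ⟪Df x z, y - z⟫ + α / 2 * ‖y - z‖ ^ 2 ≤ f x y)
    (hlip : ∀ x' ∈ X, ∀ x ∈ X, ∀ y ∈ X, ‖Df x x' - Df y x'‖ ≤ β * ‖x - y‖)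
    (hG : ∀ x ∈ X, ‖Df x x‖ ≤ G)
    (xs : E) (hxs : xs ∈ X)
    (hVI : ∀ x ∈ X, 0 ≤ ⟪Df xs xs, x - xs⟫)
    (N : ℕ) (x : Fin N → E) (hx : ∀ n, x n ∈ X) :
    ∑ n, (f (x n) (x n) - sInf (f (x n) '' X))
      ≤ min (G * ∑ n, ‖x n - xs‖) (∑ n, (f (x n) (x n) - f (x n) xs))
        + ∑ n, min (β * Metric.diam X * ‖x n - xs‖) (β ^ 2 / (2 * α) * ‖x n - xs‖ ^ 2) :=
  stmt_12_general X hXcp f Df α β G hα hsc hlip hG xs hxs hVI N x hx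
end

section
/- Suppose f is (α,β)-regular and x_* ∈ X solves DEP(X,Φ), i.e. f_x(x_*) ≤ f_x(x) for all x ∈ X. Then for any sequence x_1,…,x_N ∈ X, choosing minimizers x_n* ∈ argmin_{x∈X} f_{x_n}(x), the dynamic regret satisfies Regret^d_N ≥ (α/2) Σ_{n=1}^N ‖x_n* − x_*‖². -/
open scoped RealInnerProductSpace
open Filter Set Topology

/-! The first-order strong convexity inequality makes each `f_{x_n}` `α`-strongly convex, so along
the segment from its minimizer `x_n*` to `x_*` it lies `α/2 · t(1-t)‖x_n* - x_*‖²` below its chord;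
letting `t → 0` gives `f_{x_n}(x_*) - f_{x_n}(x_n*) ≥ α/2 ‖x_n* - x_*‖²`. Since `x_*` solves the
DEP, `f_{x_n}(x_*) ≤ f_{x_n}(x_n)`, and summing over `n` bounds the dynamic regret. -/

section StrongConvexity

variable {E : Type*} [NormedAddCommGroup E] [InnerProductSpace ℝ E]
  {s : Set E} {g : E → ℝ} {m : ℝ}

lemma strongConvexOn_of_add_inner_le (hs : Convex ℝ s) (Dg : E → E)
    (hg : ∀ y ∈ s, ∀ z ∈ s, g z + ⟪Dg z, y - z⟫ + m / 2 * ‖y - z‖ ^ 2 ≤ g y) :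
    StrongConvexOn s m g := by
  refine ⟨hs, fun x hx y hy a b ha hb hab => ?_⟩
  obtain rfl : b = 1 - a := by linarith
  set z := a • x + (1 - a) • y
  have hz : z ∈ s := hs hx hy ha hb hab
  have hxz : x - z = (1 - a) • (x - y) := by
    simp only [z]; module
  have hyz : y - z = -a • (x - y) := by
    simp only [z]; module
  have hx' := hg x hx z hz
  have hy' := hg y hy z hz
  rw [hxz, real_inner_smul_right, norm_smul, Real.norm_of_nonneg hb] at hx'
  rw [hyz, real_inner_smul_right, norm_smul, norm_neg, Real.norm_of_nonneg ha] at hy'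
  have hcomb := add_le_add (mul_le_mul_of_nonneg_left hx' ha) (mul_le_mul_of_nonneg_left hy' hb)
  simp only [smul_eq_mul]
  linear_combination hcomb

lemma StrongConvexOn.mul_sq_norm_sub_le_of_isMinOn (hg : StrongConvexOn s m g) {a b : E}
    (ha : a ∈ s) (hb : b ∈ s) (hmin : IsMinOn g s a) :
    m / 2 * ‖a - b‖ ^ 2 ≤ g b - g a := by
  have hchord : ∀ t ∈ Ioo (0 : ℝ) 1, m / 2 * ‖a - b‖ ^ 2 * (1 - t) ≤ g b - g a := by
    rintro t ⟨ht0, ht1⟩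
    have hseg := hg.2 ha hb (sub_nonneg.2 ht1.le) ht0.le (by ring)
    have hle : g a ≤ g ((1 - t) • a + t • b) := hmin (hg.1 ha hb (by linarith) ht0.le (by ring))
    simp only [smul_eq_mul] at hseg
    have : t * (m / 2 * ‖a - b‖ ^ 2 * (1 - t)) ≤ t * (g b - g a) := by
      linear_combination hseg + hle
    exact le_of_mul_le_mul_left this ht0
  have hlim : Tendsto (fun t : ℝ => m / 2 * ‖a - b‖ ^ 2 * (1 - t)) (𝓝[>] 0)
      (𝓝 (m / 2 * ‖a - b‖ ^ 2)) := by
    have hcont : Continuous fun t : ℝ => m / 2 * ‖a - b‖ ^ 2 * (1 - t) := by fun_prop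
    simpa using (hcont.tendsto 0).mono_left nhdsWithin_le_nhds
  exact le_of_tendsto hlim (eventually_of_mem (Ioo_mem_nhdsGT one_pos) hchord)

end StrongConvexity

theorem stmt_13_general
    {E : Type*} [NormedAddCommGroup E] [InnerProductSpace ℝ E]
    (X : Set E) (hXcv : Convex ℝ X)
    (f : E → E → ℝ) (Df : E → E → E) (α : ℝ)
    (hsc : ∀ x ∈ X, ∀ y ∈ X, ∀ z ∈ X,
      f x z + ⟪Df x z, y - z⟫ + α / 2 * ‖y - z‖ ^ 2 ≤ f x y)
    (xsd : E) (hxsd : xsd ∈ X)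
    (hDEP : ∀ x ∈ X, f x xsd ≤ f x x)
    (N : ℕ) (x : Fin N → E) (hx : ∀ n, x n ∈ X)
    (xm : Fin N → E) (hxm : ∀ n, xm n ∈ X ∧ ∀ z ∈ X, f (x n) (xm n) ≤ f (x n) z) :
    α / 2 * ∑ n, ‖xm n - xsd‖ ^ 2
      ≤ ∑ n, (f (x n) (x n) - sInf (f (x n) '' X)) := by
  rw [Finset.mul_sum]
  refine Finset.sum_le_sum fun n _ => ?_
  obtain ⟨hxmX, hxmin⟩ := hxm n
  have hinf : sInf (f (x n) '' X) = f (x n) (xm n) :=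
    IsLeast.csInf_eq ⟨mem_image_of_mem _ hxmX, forall_mem_image.2 hxmin⟩
  have hgrowth := (strongConvexOn_of_add_inner_le hXcv (Df (x n)) (hsc (x n) (hx n))
    ).mul_sq_norm_sub_le_of_isMinOn hxmX hxsd (isMinOn_iff.2 hxmin)
  linarith [hDEP (x n) (hx n)]

/-- If `f` is `(α,β)`-regular and `x_*` solves DEP(X,Φ), then for any
sequence `x_1,…,x_N ∈ X` with minimizers `x_n* ∈ argmin_{x∈X} f_{x_n}(x)`,
`Regret^d_N ≥ (α/2) Σ ‖x_n* − x_*‖²`. -/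
theorem stmt_13
    {E : Type*} [NormedAddCommGroup E] [InnerProductSpace ℝ E] [FiniteDimensional ℝ E]
    (X : Set E) (hXne : X.Nonempty) (hXcp : IsCompact X) (hXcv : Convex ℝ X)
    (f : E → E → ℝ) (Df : E → E → E) (α β : ℝ) (hα : 0 ≤ α) (hβ : 0 ≤ β)
    (hsc : ∀ x ∈ X, ∀ y ∈ X, ∀ z ∈ X,
      f x z + ⟪Df x z, y - z⟫ + α / 2 * ‖y - z‖ ^ 2 ≤ f x y)
    (hlip : ∀ x' ∈ X, ∀ x ∈ X, ∀ y ∈ X, ‖Df x x' - Df y x'‖ ≤ β * ‖x - y‖)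
    (xsd : E) (hxsd : xsd ∈ X)
    (hDEP : ∀ x ∈ X, f x xsd ≤ f x x)
    (N : ℕ) (x : Fin N → E) (hx : ∀ n, x n ∈ X)
    (xm : Fin N → E) (hxm : ∀ n, xm n ∈ X ∧ ∀ z ∈ X, f (x n) (xm n) ≤ f (x n) z) :
    α / 2 * ∑ n, ‖xm n - xsd‖ ^ 2
      ≤ ∑ n, (f (x n) (x n) - sInf (f (x n) '' X)) :=
  stmt_13_general X hXcv f Df α hsc xsd hxsd hDEP N x hx xm hxm
end

section
/- Suppose f is (α,β)-regular with α > β, and let x* ∈ X be a solution of VI(X,F). Then for any sequence x_1,…,x_N ∈ X, Regret^d_N ≤ Regret^s_N(x*) + (β²/(2α(α−β))) Σ_{n=1}^N ⟨∇f_{x_n}(x_n), x_n − x*⟩, where the last sum is the static regret of the linearized losses ⟨∇f_{x_n}(x_n), ·⟩ against x*. -/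
open scoped RealInnerProductSpace

/-- If `f` is `(α,β)`-regular with `α > β` and `x*` solves VI(X,F),
then for any sequence `x_1,…,x_N ∈ X`,
`Regret^d_N ≤ Regret^s_N(x*) + (β²/(2α(α−β))) Σ ⟪∇f_{x_n}(x_n), x_n − x*⟫`. -/
theorem stmt_14
    {E : Type*} [NormedAddCommGroup E] [InnerProductSpace ℝ E] [FiniteDimensional ℝ E]
    (X : Set E) (hXne : X.Nonempty) (hXcp : IsCompact X) (hXcv : Convex ℝ X)
    (f : E → E → ℝ) (Df : E → E → E) (α β : ℝ) (hβ : 0 ≤ β) (hαβ : β < α)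
    (hsc : ∀ x ∈ X, ∀ y ∈ X, ∀ z ∈ X,
      f x z + ⟪Df x z, y - z⟫ + α / 2 * ‖y - z‖ ^ 2 ≤ f x y)
    (hlip : ∀ x' ∈ X, ∀ x ∈ X, ∀ y ∈ X, ‖Df x x' - Df y x'‖ ≤ β * ‖x - y‖)
    (xs : E) (hxs : xs ∈ X)
    (hVI : ∀ x ∈ X, 0 ≤ ⟪Df xs xs, x - xs⟫)
    (N : ℕ) (x : Fin N → E) (hx : ∀ n, x n ∈ X) :
    ∑ n, (f (x n) (x n) - sInf (f (x n) '' X))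
      ≤ ∑ n, (f (x n) (x n) - f (x n) xs)
        + β ^ 2 / (2 * α * (α - β)) * ∑ n, ⟪Df (x n) (x n), x n - xs⟫ := by
  have hα : 0 < α := lt_of_le_of_lt hβ hαβ
  set c : ℝ := β ^ 2 / (2 * α * (α - β)) with hc
  have hαβ' : 0 < α - β := sub_pos.mpr hαβ
  have hc0 : 0 ≤ c := div_nonneg (by positivity) (by positivity)
  have hce : c * (α - β) = β ^ 2 / (2 * α) := by
    rw [hc]; field_simp
  have key : ∀ n, f (x n) xs - c * ⟪Df (x n) (x n), x n - xs⟫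
      ≤ sInf (f (x n) '' X) := by
    intro n
    set z := x n with hz
    have hzX := hx n
    set d : ℝ := ‖z - xs‖ with hd
    have hd0 : 0 ≤ d := norm_nonneg _
    -- strong monotonicity of gradient of f z
    have hmono : α * d ^ 2 ≤ ⟪Df z z - Df z xs, z - xs⟫ := by
      have h1 := hsc z hzX z hzX xs hxs
      have h2 := hsc z hzX xs hxs z hzX
      have hnorm : ‖xs - z‖ = ‖z - xs‖ := norm_sub_rev _ _
      have hneg : ⟪Df z z, xs - z⟫ = -⟪Df z z, z - xs⟫ := by
        rw [show xs - z = -(z - xs) from (neg_sub z xs).symm, inner_neg_right]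
      have hsub : ⟪Df z z - Df z xs, z - xs⟫
          = ⟪Df z z, z - xs⟫ - ⟪Df z xs, z - xs⟫ := inner_sub_left _ _ _
      rw [hnorm] at h2
      nlinarith [h1, h2]
    -- Lipschitz bound at z - xs
    have hlip1 : |⟪Df z xs - Df xs xs, z - xs⟫| ≤ β * d ^ 2 := by
      calc |⟪Df z xs - Df xs xs, z - xs⟫|
          ≤ ‖Df z xs - Df xs xs‖ * ‖z - xs‖ := abs_real_inner_le_norm _ _
        _ ≤ (β * ‖z - xs‖) * ‖z - xs‖ := by
            gcongr; exact hlip xs hxs z hzX xs hxs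
        _ = β * d ^ 2 := by ring
    -- VI at z
    have hVIz := hVI z hzX
    -- s ≥ (α - β) d²
    have hs : (α - β) * d ^ 2 ≤ ⟪Df z z, z - xs⟫ := by
      have hsplit : ⟪Df z z, z - xs⟫
          = ⟪Df z z - Df z xs, z - xs⟫ + ⟪Df z xs - Df xs xs, z - xs⟫
            + ⟪Df xs xs, z - xs⟫ := by
        rw [inner_sub_left, inner_sub_left]; ring
      have := abs_le.mp hlip1
      nlinarith
    -- pointwise lower bound for f z on X
    apply le_csInf (hXne.image _)
    rintro b ⟨y, hyX, rfl⟩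
    set t : ℝ := ‖y - xs‖ with ht
    have ht0 : 0 ≤ t := norm_nonneg _
    have h3 := hsc z hzX y hyX xs hxs
    have hlip2 : |⟪Df z xs - Df xs xs, y - xs⟫| ≤ β * d * t := by
      calc |⟪Df z xs - Df xs xs, y - xs⟫|
          ≤ ‖Df z xs - Df xs xs‖ * ‖y - xs‖ := abs_real_inner_le_norm _ _
        _ ≤ (β * ‖z - xs‖) * ‖y - xs‖ := by
            gcongr; exact hlip xs hxs z hzX xs hxs
        _ = β * d * t := by ring
    have hVIy := hVI y hyX
    have hsplit2 : ⟪Df z xs, y - xs⟫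
        = ⟪Df z xs - Df xs xs, y - xs⟫ + ⟪Df xs xs, y - xs⟫ := by
      rw [inner_sub_left]; ring
    have hinner : -(β * d * t) ≤ ⟪Df z xs, y - xs⟫ := by
      have := abs_le.mp hlip2
      linarith [hsplit2.ge, hsplit2.le, this.1]
    -- f z y ≥ f z xs - β d t + α/2 t²
    have hfy : f z xs - β * d * t + α / 2 * t ^ 2 ≤ f z y := by
      have : ‖y - xs‖ = t := ht.symm
      nlinarith [h3]
    -- c * s ≥ β² d² / (2α) ≥ β d t - α/2 t²
    have hcs : β ^ 2 / (2 * α) * d ^ 2 ≤ c * ⟪Df z z, z - xs⟫ := by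
      have h4 : c * ((α - β) * d ^ 2) ≤ c * ⟪Df z z, z - xs⟫ :=
        mul_le_mul_of_nonneg_left hs hc0
      calc β ^ 2 / (2 * α) * d ^ 2 = c * (α - β) * d ^ 2 := by rw [hce]
        _ = c * ((α - β) * d ^ 2) := by ring
        _ ≤ _ := h4
    have hquad : β * d * t - α / 2 * t ^ 2 ≤ β ^ 2 / (2 * α) * d ^ 2 := by
      have h5 : 0 ≤ (β * d - α * t) ^ 2 := sq_nonneg _
      have h2α : (0:ℝ) < 2 * α := by positivity
      rw [show β ^ 2 / (2 * α) * d ^ 2 = β ^ 2 * d ^ 2 / (2 * α) by ring,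
        le_div_iff₀ h2α]
      nlinarith [h5]
    linarith
  calc ∑ n, (f (x n) (x n) - sInf (f (x n) '' X))
      ≤ ∑ n, (f (x n) (x n) - f (x n) xs + c * ⟪Df (x n) (x n), x n - xs⟫) := by
        apply Finset.sum_le_sum
        intro n _
        linarith [key n]
    _ = ∑ n, (f (x n) (x n) - f (x n) xs)
        + c * ∑ n, ⟪Df (x n) (x n), x n - xs⟫ := by
        rw [Finset.sum_add_distrib, Finset.mul_sum]
end

section
/- Suppose X is α_X-strongly convex for some α_X ≥ 0: for all x,x' ∈ X, every λ ∈ [0,1] and every unit vector v ∈ E, the point λx + (1−λ)x' + (α_X λ(1−λ)/2)‖x−x'‖² v belongs to X. Let F : X → E and let x* ∈ X solve VI(X,F). Then ⟨F(x*), x − x*⟩ ≥ (α_X/2)‖x − x*‖² · ‖F(x*)‖ for all x ∈ X. If moreover F is L-Lipschitz on X, then ⟨F(x), x − x*⟩ ≥ ((α_X/2)‖F(x*)‖ − L)‖x − x*‖² for all x ∈ X; in particular, if F(x*) ≠ 0 and α_X ≥ 2L/‖F(x*)‖, then x* solves DVI(X,F). -/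
open scoped RealInnerProductSpace

/-- If `X` is `α_X`-strongly convex and `x*` solves VI(X,F), then
`⟪F(x*), x − x*⟫ ≥ (α_X/2)‖x − x*‖² ‖F(x*)‖` on `X`; if moreover `F` is
`L`-Lipschitz on `X`, then `⟪F(x), x − x*⟫ ≥ ((α_X/2)‖F(x*)‖ − L)‖x − x*‖²` on `X`,
and if `F(x*) ≠ 0` and `α_X ≥ 2L/‖F(x*)‖` then `x*` solves DVI(X,F). -/
theorem stmt_15
    {E : Type*} [NormedAddCommGroup E] [InnerProductSpace ℝ E] [FiniteDimensional ℝ E]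
    (X : Set E) (hXne : X.Nonempty) (hXcp : IsCompact X) (hXcv : Convex ℝ X)
    (αX : ℝ) (hαX : 0 ≤ αX)
    (hXsc : ∀ x ∈ X, ∀ x' ∈ X, ∀ l : ℝ, l ∈ Set.Icc (0 : ℝ) 1 → ∀ v : E, ‖v‖ = 1 →
      l • x + (1 - l) • x' + (αX * l * (1 - l) / 2 * ‖x - x'‖ ^ 2) • v ∈ X)
    (F : E → E) (xs : E) (hxs : xs ∈ X)
    (hVI : ∀ x ∈ X, 0 ≤ ⟪F xs, x - xs⟫) :
    (∀ x ∈ X, αX / 2 * ‖x - xs‖ ^ 2 * ‖F xs‖ ≤ ⟪F xs, x - xs⟫)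
    ∧
    (∀ L : ℝ, (∀ x ∈ X, ∀ y ∈ X, ‖F x - F y‖ ≤ L * ‖x - y‖) →
      (∀ x ∈ X, (αX / 2 * ‖F xs‖ - L) * ‖x - xs‖ ^ 2 ≤ ⟪F x, x - xs⟫)
      ∧
      (F xs ≠ 0 → 2 * L / ‖F xs‖ ≤ αX → ∀ x ∈ X, 0 ≤ ⟪F x, x - xs⟫)) := by
  have key : ∀ x ∈ X, αX / 2 * ‖x - xs‖ ^ 2 * ‖F xs‖ ≤ ⟪F xs, x - xs⟫ := by
    intro x hx
    by_cases hF : F xs = 0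
    · simpa [hF] using hVI x hx
    have hFn : (0:ℝ) < ‖F xs‖ := norm_pos_iff.mpr hF
    set c : ℝ := ⟪F xs, x - xs⟫ with hc
    have hc0 : 0 ≤ c := hVI x hx
    set K : ℝ := αX / 2 * ‖x - xs‖ ^ 2 * ‖F xs‖ with hK
    have hK0 : 0 ≤ K := by positivity
    have hmain : ∀ l : ℝ, 0 < l → l ≤ 1 → (1 - l) * K ≤ c := by
      intro l hl0 hl1
      have hv : ‖(-(‖F xs‖⁻¹) • F xs)‖ = 1 := by
        rw [norm_smul, Real.norm_eq_abs, abs_neg, abs_of_nonneg (by positivity : (0:ℝ) ≤ ‖F xs‖⁻¹)]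
        field_simp
      have hy := hXsc x hx xs hxs l ⟨le_of_lt hl0, hl1⟩ _ hv
      have h0 := hVI _ hy
      have hdiff : (l • x + (1 - l) • xs + (αX * l * (1 - l) / 2 * ‖x - xs‖ ^ 2) • (-(‖F xs‖⁻¹) • F xs)) - xs
          = l • (x - xs) + (αX * l * (1 - l) / 2 * ‖x - xs‖ ^ 2) • (-(‖F xs‖⁻¹) • F xs) := by
        module
      rw [hdiff, inner_add_right, real_inner_smul_right, real_inner_smul_right,
        real_inner_smul_right, real_inner_self_eq_norm_sq] at h0
      have hinv : -‖F xs‖⁻¹ * ‖F xs‖ ^ 2 = -‖F xs‖ := by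
        field_simp
      rw [hinv] at h0
      have h0' : αX * l * (1 - l) / 2 * ‖x - xs‖ ^ 2 * ‖F xs‖ ≤ l * c := by
        rw [hc]; linarith
      have : l * ((1 - l) * K) ≤ l * c := by
        calc l * ((1 - l) * K) = αX * l * (1 - l) / 2 * ‖x - xs‖ ^ 2 * ‖F xs‖ := by
              rw [hK]; ring
          _ ≤ l * c := h0'
      exact le_of_mul_le_mul_left this hl0
    by_contra hcon
    push_neg at hcon
    have hKpos : 0 < K := lt_of_le_of_lt hc0 hcon
    have hl0 : 0 < (K - c) / (2 * K) := div_pos (by linarith) (by linarith)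
    have hl1 : (K - c) / (2 * K) ≤ 1 := by
      rw [div_le_one (by positivity)]; nlinarith
    have := hmain _ hl0 hl1
    have heq : (1 - (K - c) / (2 * K)) * K = (K + c) / 2 := by
      field_simp; ring
    rw [heq] at this
    nlinarith
  refine ⟨key, fun L hLip => ?_⟩
  have hbound : ∀ x ∈ X, (αX / 2 * ‖F xs‖ - L) * ‖x - xs‖ ^ 2 ≤ ⟪F x, x - xs⟫ := by
    intro x hx
    have h1 := key x hx
    have hsplit : ⟪F x - F xs, x - xs⟫ = ⟪F x, x - xs⟫ - ⟪F xs, x - xs⟫ :=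
      inner_sub_left _ _ _
    have hcs : |⟪F x - F xs, x - xs⟫| ≤ ‖F x - F xs‖ * ‖x - xs‖ :=
      abs_real_inner_le_norm _ _
    have hcs' : -(‖F x - F xs‖ * ‖x - xs‖) ≤ ⟪F x - F xs, x - xs⟫ :=
      neg_le_of_abs_le hcs
    have hL := hLip x hx xs hxs
    have hnn : (0:ℝ) ≤ ‖x - xs‖ := norm_nonneg _
    nlinarith [sq_nonneg (‖x - xs‖)]
  refine ⟨hbound, fun hF hα x hx => ?_⟩
  have hFn : (0:ℝ) < ‖F xs‖ := norm_pos_iff.mpr hF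
  have hcoef : 0 ≤ αX / 2 * ‖F xs‖ - L := by
    rw [div_le_iff₀ hFn] at hα
    nlinarith
  have := hbound x hx
  nlinarith [sq_nonneg (‖x - xs‖)]
end

section
/- Let α > 0, β ≥ 0, a ≥ 0, and let l, l' : X → ℝ be differentiable α-strongly convex functions with minimizers y = argmin_{x∈X} l(x) and y' = argmin_{x∈X} l'(x). If points u, u' ∈ X satisfy ‖∇l(x) − ∇l'(x)‖ ≤ β‖u − u'‖ + a for all x ∈ X, then ‖y − y'‖ ≤ (β/α)‖u − u'‖ + a/α. -/
open scoped RealInnerProductSpace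

/-- First-order optimality condition for a minimizer over a convex set. -/
lemma foc_aux {E : Type*} [NormedAddCommGroup E] [InnerProductSpace ℝ E] [CompleteSpace E]
    {X : Set E} (hXcv : Convex ℝ X) {l : E → ℝ} {g : E} {y : E} (hy : y ∈ X)
    (hgrad : HasGradientAt l g y) (hymin : ∀ z ∈ X, l y ≤ l z)
    {z : E} (hz : z ∈ X) : 0 ≤ ⟪g, z - y⟫ := by
  have hmin : IsLocalMinOn l X y :=
    (isMinOn_iff.mpr hymin).filter_mono inf_le_right
  have hcone : z - y ∈ posTangentConeAt X y :=
    sub_mem_posTangentConeAt_of_segment_subset (hXcv.segment_subset hy hz)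
  have h := hmin.hasFDerivWithinAt_nonneg (hgrad.hasFDerivAt.hasFDerivWithinAt) hcone
  simpa [InnerProductSpace.toDual_apply_apply] using h

/-- Let `α > 0`, `β ≥ 0`, `a ≥ 0`, and let `l, l'` be differentiable
`α`-strongly convex functions on `X` with minimizers `y, y'`. If `u, u' ∈ X` satisfy
`‖∇l(x) − ∇l'(x)‖ ≤ β‖u − u'‖ + a` for all `x ∈ X`, then
`‖y − y'‖ ≤ (β/α)‖u − u'‖ + a/α`. -/
theorem stmt_19
    {E : Type*} [NormedAddCommGroup E] [InnerProductSpace ℝ E] [FiniteDimensional ℝ E]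
    (X : Set E) (hXne : X.Nonempty) (hXcp : IsCompact X) (hXcv : Convex ℝ X)
    (l l' : E → ℝ) (Dl Dl' : E → E) (α β a : ℝ)
    (hα : 0 < α) (hβ : 0 ≤ β) (ha : 0 ≤ a)
    (hgrad : ∀ z ∈ X, HasGradientAt l (Dl z) z)
    (hgrad' : ∀ z ∈ X, HasGradientAt l' (Dl' z) z)
    (hsc : ∀ y ∈ X, ∀ z ∈ X, l z + ⟪Dl z, y - z⟫ + α / 2 * ‖y - z‖ ^ 2 ≤ l y)
    (hsc' : ∀ y ∈ X, ∀ z ∈ X, l' z + ⟪Dl' z, y - z⟫ + α / 2 * ‖y - z‖ ^ 2 ≤ l' y)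
    (y y' : E) (hy : y ∈ X) (hy' : y' ∈ X)
    (hymin : ∀ z ∈ X, l y ≤ l z) (hymin' : ∀ z ∈ X, l' y' ≤ l' z)
    (u u' : E) (hu : u ∈ X) (hu' : u' ∈ X)
    (hdiff : ∀ x ∈ X, ‖Dl x - Dl' x‖ ≤ β * ‖u - u'‖ + a) :
    ‖y - y'‖ ≤ β / α * ‖u - u'‖ + a / α := by
  have hC0 : 0 ≤ β * ‖u - u'‖ + a := by positivity
  have key : α * ‖y - y'‖ ≤ β * ‖u - u'‖ + a := by
    rcases eq_or_lt_of_le (norm_nonneg (y - y')) with h0 | h0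
    · rw [← h0]; simpa using hC0
    have foc1 : 0 ≤ ⟪Dl y, y' - y⟫ := foc_aux hXcv hy (hgrad y hy) hymin hy'
    have foc2 : 0 ≤ ⟪Dl' y', y - y'⟫ := foc_aux hXcv hy' (hgrad' y' hy') hymin' hy
    have h1 := hsc y' hy' y hy
    have h2 := hsc y hy y' hy'
    have hsym : ‖y' - y‖ = ‖y - y'‖ := norm_sub_rev _ _
    rw [hsym] at h1
    have e1 : ⟪Dl y', y - y'⟫ = -⟪Dl y', y' - y⟫ := by
      rw [← inner_neg_right, neg_sub]
    have e2 : ⟪Dl' y', y - y'⟫ = -⟪Dl' y', y' - y⟫ := by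
      rw [← inner_neg_right, neg_sub]
    -- strong monotonicity
    have mono : α * ‖y - y'‖ ^ 2 ≤ ⟪Dl y', y' - y⟫ - ⟪Dl y, y' - y⟫ := by
      linarith
    -- per-point gradient difference bound at y'
    have hb : ⟪Dl y', y' - y⟫ - ⟪Dl' y', y' - y⟫ ≤ (β * ‖u - u'‖ + a) * ‖y - y'‖ := by
      have := real_inner_le_norm (Dl y' - Dl' y') (y' - y)
      rw [inner_sub_left] at this
      calc ⟪Dl y', y' - y⟫ - ⟪Dl' y', y' - y⟫ ≤ ‖Dl y' - Dl' y'‖ * ‖y' - y‖ := this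
        _ ≤ (β * ‖u - u'‖ + a) * ‖y - y'‖ := by
            rw [hsym]
            exact mul_le_mul_of_nonneg_right (hdiff y' hy') (norm_nonneg _)
    nlinarith [mono, hb, foc1, foc2, e2, h0]
  rw [div_mul_eq_mul_div, ← add_div, le_div_iff₀ hα]
  linarith
end
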